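/- arXiv:0711.4231 — 3 statements merged into one kernel-verified Lean document; each statement's English description precedes it below -/
import Mathlib

section
/- Let V, V₀ and W be finite-dimensional complex vector spaces equipped with linear involutions J_V, J₀ and J_W, and suppose trace(J₀) = 0 (the superdimension of V₀ is zero). Let α : V₀ ⊗ W → V and β : V → V₀ ⊗ W be even linear maps, i.e. α ∘ (J₀ ⊗ J_W) = J_V ∘ α and β ∘ J_V = (J₀ ⊗ J_W) ∘ β, with α ∘ β = id_V. Let f : V → V be a linear map and suppose there exists c ∈ ℂ such that ptr(β ∘ f ∘ α) = c · id_{V₀}, where ptr denotes the partial supertrace over W. Then trace(J_V ∘ f) = 0, i.e. the supertrace of f vanishes. -/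
/-!
Since `α ∘ β = id` and `β` is even, cycling the trace gives
`str_V f = str_{V₀ ⊗ W} (β ∘ f ∘ α)`. Taking the partial supertrace over `W` first does not
change a supertrace: `str_{V₀} (ptr h) = str_{V₀ ⊗ W} h`, which by linearity reduces to
`h = f₀ ⊗ f₁`, where both sides are `str f₀ · str f₁`. Hence
`str_V f = str_{V₀} (c • id) = c · sdim V₀ = 0`.
-/

open LinearMap TensorProduct

/-- The partial supertrace over `W` of an endomorphism of `V₀ ⊗ W`:
`ptr f = (id ⊗ ev) ∘ (((id ⊗ J_W) ∘ f) ⊗ id_{W*}) ∘ (id ⊗ coev)`. -/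
noncomputable def ptr {V₀ W : Type*} [AddCommGroup V₀] [Module ℂ V₀]
    [AddCommGroup W] [Module ℂ W] [FiniteDimensional ℂ W]
    (JW : W →ₗ[ℂ] W) (f : (V₀ ⊗[ℂ] W) →ₗ[ℂ] (V₀ ⊗[ℂ] W)) : V₀ →ₗ[ℂ] V₀ :=
  (TensorProduct.rid ℂ V₀).toLinearMap
    ∘ₗ TensorProduct.map LinearMap.id (contractRight ℂ W)
    ∘ₗ (TensorProduct.assoc ℂ V₀ W (Module.Dual ℂ W)).toLinearMap
    ∘ₗ TensorProduct.map ((TensorProduct.map LinearMap.id JW) ∘ₗ f) LinearMap.id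
    ∘ₗ (TensorProduct.assoc ℂ V₀ W (Module.Dual ℂ W)).symm.toLinearMap
    ∘ₗ TensorProduct.map LinearMap.id (coevaluation ℂ W)
    ∘ₗ (TensorProduct.rid ℂ V₀).symm.toLinearMap

theorem trace_comp_eq_trace_comp_of_retract {R M N : Type*} [CommRing R]
    [AddCommGroup M] [Module R M] [Module.Free R M] [Module.Finite R M]
    [AddCommGroup N] [Module R N] [Module.Free R N] [Module.Finite R N]
    {JM : M →ₗ[R] M} {JN : N →ₗ[R] N} {α : N →ₗ[R] M} {β : M →ₗ[R] N}
    (hβ : β ∘ₗ JM = JN ∘ₗ β) (hαβ : α ∘ₗ β = LinearMap.id) (f : M →ₗ[R] M) :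
    trace R M (JM ∘ₗ f) = trace R N (JN ∘ₗ β ∘ₗ f ∘ₗ α) :=
  calc trace R M (JM ∘ₗ f)
      = trace R M ((JM ∘ₗ f ∘ₗ α) ∘ₗ β) := by rw [comp_assoc, comp_assoc, hαβ, comp_id]
    _ = trace R N (β ∘ₗ JM ∘ₗ f ∘ₗ α) := trace_comp_comm' _ _
    _ = trace R N (JN ∘ₗ β ∘ₗ f ∘ₗ α) := by rw [← comp_assoc, hβ, comp_assoc]

theorem trace_eq_sum_coord {R M ι : Type*} [CommRing R] [AddCommGroup M] [Module R M]
    [Fintype ι] [DecidableEq ι] (b : Module.Basis ι R M) (g : M →ₗ[R] M) :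
    trace R M g = ∑ i, b.coord i (g (b i)) := by
  rw [trace_eq_matrix_trace R b, Matrix.trace]
  simp only [Matrix.diag, toMatrix_apply, Module.Basis.coord_apply]

section PartialSupertrace

variable {V₀ W : Type*} [AddCommGroup V₀] [Module ℂ V₀] [AddCommGroup W] [Module ℂ W]
  [FiniteDimensional ℂ W] (JW : W →ₗ[ℂ] W)

theorem ptr_add (f g : (V₀ ⊗[ℂ] W) →ₗ[ℂ] (V₀ ⊗[ℂ] W)) :
    ptr JW (f + g) = ptr JW f + ptr JW g := by
  simp only [ptr, comp_add, map_add_left, add_comp]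

theorem ptr_zero : ptr (V₀ := V₀) JW 0 = 0 := by
  simp only [ptr, comp_zero, map_zero_left, zero_comp]

theorem ptr_map (f₀ : V₀ →ₗ[ℂ] V₀) (f₁ : W →ₗ[ℂ] W) :
    ptr JW (map f₀ f₁) = trace ℂ W (JW ∘ₗ f₁) • f₀ := by
  classical
  ext v
  rw [trace_eq_sum_coord (Module.Basis.ofVectorSpace ℂ W), LinearMap.smul_apply, Finset.sum_smul]
  simp only [ptr, coe_comp, LinearEquiv.coe_coe, Function.comp_apply, rid_symm_apply, map_tmul,
    id_coe, id_eq, coevaluation_apply_one, Module.Basis.coe_ofVectorSpace, tmul_sum, map_sum,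
    assoc_symm_tmul, assoc_tmul, contractRight_apply, Module.Basis.coord_apply, rid_tmul]

variable [FiniteDimensional ℂ V₀]

theorem trace_comp_ptr (J₀ : V₀ →ₗ[ℂ] V₀) (h : (V₀ ⊗[ℂ] W) →ₗ[ℂ] (V₀ ⊗[ℂ] W)) :
    trace ℂ V₀ (J₀ ∘ₗ ptr JW h) = trace ℂ (V₀ ⊗[ℂ] W) (map J₀ JW ∘ₗ h) := by
  obtain ⟨x, rfl⟩ := (homTensorHomEquiv ℂ V₀ W V₀ W).surjective h
  induction x using TensorProduct.induction_on with
  | zero => simp only [map_zero, ptr_zero, comp_zero]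
  | tmul f₀ f₁ =>
    rw [homTensorHomEquiv_apply, homTensorHomMap_apply, ptr_map, ← map_comp,
      trace_tensorProduct', comp_smul, map_smul, smul_eq_mul, mul_comm]
  | add x y hx hy =>
    rw [map_add, ptr_add, comp_add, comp_add, map_add, map_add, hx, hy]

end PartialSupertrace

theorem supertrace_eq_zero_of_retract_general
    {V V₀ W : Type*} [AddCommGroup V] [Module ℂ V] [FiniteDimensional ℂ V]
    [AddCommGroup V₀] [Module ℂ V₀] [FiniteDimensional ℂ V₀]
    [AddCommGroup W] [Module ℂ W] [FiniteDimensional ℂ W]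
    (JV : V →ₗ[ℂ] V) (J₀ : V₀ →ₗ[ℂ] V₀) (JW : W →ₗ[ℂ] W)
    (hsdim : trace ℂ V₀ J₀ = 0)
    (α : (V₀ ⊗[ℂ] W) →ₗ[ℂ] V) (β : V →ₗ[ℂ] (V₀ ⊗[ℂ] W))
    (hβ : β ∘ₗ JV = TensorProduct.map J₀ JW ∘ₗ β)
    (hαβ : α ∘ₗ β = LinearMap.id)
    (f : V →ₗ[ℂ] V) (c : ℂ)
    (hc : ptr JW (β ∘ₗ f ∘ₗ α) = c • LinearMap.id) :
    trace ℂ V (JV ∘ₗ f) = 0 := by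
  rw [trace_comp_eq_trace_comp_of_retract hβ hαβ, ← trace_comp_ptr, hc, comp_smul, comp_id,
    map_smul, hsdim, smul_zero]

/-- If `V` is a retract (via even maps `α`, `β`) of `V₀ ⊗ W` with `sdim V₀ = 0`, and the
partial supertrace of `β ∘ f ∘ α` is a scalar multiple of the identity of `V₀`, then the
supertrace of `f` vanishes. -/
theorem supertrace_eq_zero_of_retract
    {V V₀ W : Type*} [AddCommGroup V] [Module ℂ V] [FiniteDimensional ℂ V]
    [AddCommGroup V₀] [Module ℂ V₀] [FiniteDimensional ℂ V₀]
    [AddCommGroup W] [Module ℂ W] [FiniteDimensional ℂ W]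
    (JV : V →ₗ[ℂ] V) (J₀ : V₀ →ₗ[ℂ] V₀) (JW : W →ₗ[ℂ] W)
    (hJV : JV ∘ₗ JV = LinearMap.id) (hJ₀ : J₀ ∘ₗ J₀ = LinearMap.id)
    (hJW : JW ∘ₗ JW = LinearMap.id)
    (hsdim : trace ℂ V₀ J₀ = 0)
    (α : (V₀ ⊗[ℂ] W) →ₗ[ℂ] V) (β : V →ₗ[ℂ] (V₀ ⊗[ℂ] W))
    (hα : α ∘ₗ TensorProduct.map J₀ JW = JV ∘ₗ α)
    (hβ : β ∘ₗ JV = TensorProduct.map J₀ JW ∘ₗ β)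
    (hαβ : α ∘ₗ β = LinearMap.id)
    (f : V →ₗ[ℂ] V) (c : ℂ)
    (hc : ptr JW (β ∘ₗ f ∘ₗ α) = c • LinearMap.id) :
    trace ℂ V (JV ∘ₗ f) = 0 :=
  supertrace_eq_zero_of_retract_general JV J₀ JW hsdim α β hβ hαβ f c hc
end

section
/- Let C be a ℂ-linear preadditive monoidal category with binary biproducts, in which composition and the tensor product of morphisms are ℂ-bilinear (C is monoidal preadditive and monoidal ℂ-linear), and which has right duals. Fix an object V₀ and an object T of C. Then the set IT(T) := { t ∈ Hom(𝟙, T) | there exist an object V with V ∈ I_{V₀} and a morphism f : V ⊗ Vᘁ ⟶ T such that t = η_V ≫ f } is a ℂ-submodule of the hom-module Hom(𝟙, T): it contains 0 and is closed under addition and scalar multiplication. -/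
open CategoryTheory MonoidalCategory Limits

/-- `X` belongs to the ideal `I_V`: `X` is a retract of `V ⊗ Y` for some object `Y`. -/
def memIdeal {C : Type*} [Category C] [MonoidalCategory C] (V X : C) : Prop :=
  ∃ (Y : C) (α : X ⟶ V ⊗ Y) (β : V ⊗ Y ⟶ X), α ≫ β = 𝟙 X

/-- The set of "ideal" invariant tensors in `Hom(𝟙, T)`: morphisms that factor through a
coevaluation `η_V : 𝟙 ⟶ V ⊗ Vᘁ` for some `V ∈ I_{V₀}`. -/
def IT {C : Type*} [Category C] [MonoidalCategory C] [RightRigidCategory C]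
    (V₀ T : C) : Set (𝟙_ C ⟶ T) :=
  { t | ∃ (V : C) (_ : memIdeal V₀ V) (f : V ⊗ Vᘁ ⟶ T), t = η_ V Vᘁ ≫ f }

/-!
An element of `IT V₀ T` is the same thing as a morphism `𝟙 ⟶ T` factoring through `V₀ ⊗ Z` for
some `Z`: a retraction `V ⊗ Vᘁ ⟶ V₀ ⊗ (Y ⊗ Vᘁ)` turns a factorisation through `η_V` into one
through `V₀ ⊗ -`, and conversely every `𝟙 ⟶ V₀ ⊗ Z` factors through `η_{V₀}` by duality.
Morphisms factoring through `V₀ ⊗ -` are closed under sums because `V₀ ⊗ Z₁` and `V₀ ⊗ Z₂` are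
both summands of `V₀ ⊗ (Z₁ ⊞ Z₂)`.
-/

section FactorsThroughTensorLeft

variable {C : Type*} [Category C] [MonoidalCategory C]

def factorsThroughTensorLeft (V X T : C) : Set (X ⟶ T) :=
  { t | ∃ (Z : C) (a : X ⟶ V ⊗ Z) (b : V ⊗ Z ⟶ T), t = a ≫ b }

variable (V : C) {X T : C}

lemma zero_mem_factorsThroughTensorLeft [Preadditive C] :
    (0 : X ⟶ T) ∈ factorsThroughTensorLeft V X T :=
  ⟨𝟙_ C, 0, 0, by simp⟩

lemma add_mem_factorsThroughTensorLeft [Preadditive C] [MonoidalPreadditive C]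
    [HasBinaryBiproducts C] {t t' : X ⟶ T} (ht : t ∈ factorsThroughTensorLeft V X T)
    (ht' : t' ∈ factorsThroughTensorLeft V X T) :
    t + t' ∈ factorsThroughTensorLeft V X T := by
  obtain ⟨Z, a, b, rfl⟩ := ht
  obtain ⟨Z', a', b', rfl⟩ := ht'
  refine ⟨Z ⊞ Z', a ≫ V ◁ biprod.inl + a' ≫ V ◁ biprod.inr,
    V ◁ biprod.fst ≫ b + V ◁ biprod.snd ≫ b', ?_⟩
  simp [← MonoidalCategory.whiskerLeft_comp_assoc]

lemma smul_mem_factorsThroughTensorLeft {R : Type*} [Semiring R] [Preadditive C] [Linear R C]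
    (c : R) {t : X ⟶ T} (ht : t ∈ factorsThroughTensorLeft V X T) :
    c • t ∈ factorsThroughTensorLeft V X T := by
  obtain ⟨Z, a, b, rfl⟩ := ht
  exact ⟨Z, a, c • b, by rw [Linear.comp_smul]⟩

end FactorsThroughTensorLeft

lemma eq_coevaluation_comp_whiskerLeft {C : Type*} [Category C] [MonoidalCategory C] (V Z : C)
    [HasRightDual V] (a : 𝟙_ C ⟶ V ⊗ Z) :
    a = η_ V Vᘁ ≫ V ◁ ((ρ_ (Vᘁ)).inv ≫ (tensorLeftHomEquiv (𝟙_ C) V (Vᘁ) Z).symm a) := by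
  apply (tensorLeftHomEquiv (𝟙_ C) V (Vᘁ) Z).symm.injective
  rw [tensorLeftHomEquiv_symm_coevaluation_comp_whiskerLeft]
  simp

lemma memIdeal_self {C : Type*} [Category C] [MonoidalCategory C] (V : C) : memIdeal V V :=
  ⟨𝟙_ C, (ρ_ V).inv, (ρ_ V).hom, by simp⟩

lemma IT_eq_factorsThroughTensorLeft {C : Type*} [Category C] [MonoidalCategory C]
    [RightRigidCategory C] (V₀ T : C) : IT V₀ T = factorsThroughTensorLeft V₀ (𝟙_ C) T := by
  ext t
  constructor
  · rintro ⟨V, ⟨Y, α, β, hαβ⟩, f, rfl⟩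
    refine ⟨Y ⊗ Vᘁ, η_ V Vᘁ ≫ α ▷ Vᘁ ≫ (α_ V₀ Y Vᘁ).hom, (α_ V₀ Y Vᘁ).inv ≫ β ▷ Vᘁ ≫ f, ?_⟩
    simp [← comp_whiskerRight_assoc, hαβ]
  · rintro ⟨Z, a, b, rfl⟩
    refine ⟨V₀, memIdeal_self V₀,
      V₀ ◁ ((ρ_ V₀ᘁ).inv ≫ (tensorLeftHomEquiv (𝟙_ C) V₀ V₀ᘁ Z).symm a) ≫ b, ?_⟩
    rw [← Category.assoc, ← eq_coevaluation_comp_whiskerLeft]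

theorem IT_is_submodule_general {C : Type*} [Category C] [MonoidalCategory C] [Preadditive C]
    [MonoidalPreadditive C] [HasBinaryBiproducts C] [CategoryTheory.Linear ℂ C]
    [RightRigidCategory C] (V₀ T : C) :
    (0 : 𝟙_ C ⟶ T) ∈ IT V₀ T ∧
      (∀ t t' : 𝟙_ C ⟶ T, t ∈ IT V₀ T → t' ∈ IT V₀ T → t + t' ∈ IT V₀ T) ∧
      (∀ (c : ℂ) (t : 𝟙_ C ⟶ T), t ∈ IT V₀ T → c • t ∈ IT V₀ T) := by
  rw [IT_eq_factorsThroughTensorLeft]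
  exact ⟨zero_mem_factorsThroughTensorLeft V₀, fun _ _ ↦ add_mem_factorsThroughTensorLeft V₀,
    fun c _ ↦ smul_mem_factorsThroughTensorLeft V₀ c⟩

/-- `IT(T)` contains `0` and is closed under addition and scalar multiplication, i.e. it is
a `ℂ`-subspace of `Hom(𝟙, T)`. -/
theorem IT_is_submodule {C : Type*} [Category C] [MonoidalCategory C] [Preadditive C]
    [MonoidalPreadditive C] [HasBinaryBiproducts C] [CategoryTheory.Linear ℂ C]
    [MonoidalLinear ℂ C] [RightRigidCategory C] (V₀ T : C) :
    (0 : 𝟙_ C ⟶ T) ∈ IT V₀ T ∧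
      (∀ t t' : 𝟙_ C ⟶ T, t ∈ IT V₀ T → t' ∈ IT V₀ T → t + t' ∈ IT V₀ T) ∧
      (∀ (c : ℂ) (t : 𝟙_ C ⟶ T), t ∈ IT V₀ T → c • t ∈ IT V₀ T) :=
  IT_is_submodule_general V₀ T
end

section
/- Let C be a ℂ-linear preadditive monoidal category with binary biproducts, in which composition and the tensor product of morphisms are ℂ-bilinear, and which has right duals. Fix an object V₀ and objects T', T of C. If t' : 𝟙 ⟶ T' is any morphism and t ∈ IT(T), then the composite 𝟙 ≅ 𝟙 ⊗ 𝟙 —(t' ⊗ t)→ T' ⊗ T belongs to IT(T' ⊗ T); that is, IT is a left ideal under tensoring by arbitrary morphisms out of the unit object. -/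
open CategoryTheory MonoidalCategory Limits

theorem IT.comp_mem {C : Type*} [Category C] [MonoidalCategory C] [RightRigidCategory C]
    {V₀ T T' : C} {t : 𝟙_ C ⟶ T} (ht : t ∈ IT V₀ T) (g : T ⟶ T') :
    t ≫ g ∈ IT V₀ T' := by
  obtain ⟨V, hV, f, rfl⟩ := ht
  exact ⟨V, hV, f ≫ g, Category.assoc _ _ _⟩

theorem IT_tensor_left_general {C : Type*} [Category C] [MonoidalCategory C]
    [RightRigidCategory C] (V₀ T' T : C)
    (t' : 𝟙_ C ⟶ T') (t : 𝟙_ C ⟶ T) (ht : t ∈ IT V₀ T) :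
    (λ_ (𝟙_ C)).inv ≫ (t' ⊗ₘ t) ∈ IT V₀ (T' ⊗ T) := by
  rw [leftUnitor_inv_comp_tensorHom]
  exact IT.comp_mem ht _

/-- `IT` is a left ideal: tensoring any `t' : 𝟙 ⟶ T'` with `t ∈ IT(T)` lands in `IT(T' ⊗ T)`. -/
theorem IT_tensor_left {C : Type*} [Category C] [MonoidalCategory C] [Preadditive C]
    [MonoidalPreadditive C] [HasBinaryBiproducts C] [CategoryTheory.Linear ℂ C]
    [MonoidalLinear ℂ C] [RightRigidCategory C] (V₀ T' T : C)
    (t' : 𝟙_ C ⟶ T') (t : 𝟙_ C ⟶ T) (ht : t ∈ IT V₀ T) :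
    (λ_ (𝟙_ C)).inv ≫ (t' ⊗ₘ t) ∈ IT V₀ (T' ⊗ T) :=
  IT_tensor_left_general V₀ T' T t' t ht
end
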